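/- Let k be an algebraically closed field of characteristic zero, n, m ≥ 2 integers, ζ ∈ k a primitive 2n-th root of unity, and q = ζ². Let H be the k-algebra presented by generators x_1,…,x_m, z_1,…,z_{m−1} subject to the relations x_i^n = 1, x_i x_j = x_j x_i, z_l x_i = x_{σ_l(i)} z_l, z_l z_k = z_k z_l for |k−l| ≥ 2, z_l z_{l+1} z_l = z_{l+1} z_l z_{l+1}, and z_l^2 = (1/n) ∑_{i,j=0}^{n−1} q^{−ij} x_l^i x_{l+1}^j. In H define Λ_λ = n^{−m} ∑_{i ∈ (Fin m → ZMod n)} q^{λ·i} x_1^{i_1}…x_m^{i_m}, y_l = ∑_{λ} ζ^{−λ_l λ_{l+1}} Λ_λ, and s_l = y_l z_l. Then for all 1 ≤ i ≤ m and 1 ≤ k, l ≤ m−1: s_l x_i = x_{σ_l(i)} s_l, s_l² = 1, s_l s_k = s_k s_l when |k−l| ≥ 2, and s_l s_{l+1} s_l = s_{l+1} s_l s_{l+1} when l ≤ m−2. -/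

import Mathlib

/-- The inclusion `Fin (m-1) → Fin m`, `l ↦ l`. -/
def idx1 {m : ℕ} (l : Fin (m - 1)) : Fin m := Fin.castLE (Nat.sub_le m 1) l

/-- The inclusion `Fin (m-1) → Fin m`, `l ↦ l + 1`. -/
def idx2 {m : ℕ} (l : Fin (m - 1)) : Fin m := ⟨l.1 + 1, by have := l.isLt; omega⟩

/-- The transposition `σ_l = (l, l+1)` in `Perm (Fin m)`. -/
def sigma {m : ℕ} (l : Fin (m - 1)) : Equiv.Perm (Fin m) := Equiv.swap (idx1 l) (idx2 l)

/-- The generator `x_i` of the free algebra on `x_1, …, x_m, z_1, …, z_{m-1}`. -/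
def Xgen (k : Type*) [Field k] {m : ℕ} (i : Fin m) :
    FreeAlgebra k (Fin m ⊕ Fin (m - 1)) := FreeAlgebra.ι k (Sum.inl i)

/-- The generator `z_l` of the free algebra on `x_1, …, x_m, z_1, …, z_{m-1}`. -/
def Zgen (k : Type*) [Field k] {m : ℕ} (l : Fin (m - 1)) :
    FreeAlgebra k (Fin m ⊕ Fin (m - 1)) := FreeAlgebra.ι k (Sum.inr l)

/-- The defining relations of the generalised Kac–Paljutkin algebra `H_{n,m}`:
`x_i^n = 1`, `x_i x_j = x_j x_i`, `z_l x_i = x_{σ_l(i)} z_l`, `z_l z_k = z_k z_l` for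
`|k−l| ≥ 2`, `z_l z_{l+1} z_l = z_{l+1} z_l z_{l+1}`, and
`z_l² = (1/n) ∑_{i,j=0}^{n−1} q^{−ij} x_l^i x_{l+1}^j`. -/
inductive KPRel (k : Type*) [Field k] (n m : ℕ) (q : k) :
    FreeAlgebra k (Fin m ⊕ Fin (m - 1)) → FreeAlgebra k (Fin m ⊕ Fin (m - 1)) → Prop
  | x_pow (i : Fin m) : KPRel k n m q (Xgen k i ^ n) 1
  | x_comm (i j : Fin m) : KPRel k n m q (Xgen k i * Xgen k j) (Xgen k j * Xgen k i)
  | z_x (l : Fin (m - 1)) (i : Fin m) :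
      KPRel k n m q (Zgen k l * Xgen k i) (Xgen k (sigma l i) * Zgen k l)
  | z_comm (l t : Fin (m - 1)) (h : t.1 + 2 ≤ l.1 ∨ l.1 + 2 ≤ t.1) :
      KPRel k n m q (Zgen k l * Zgen k t) (Zgen k t * Zgen k l)
  | braid (l : Fin (m - 1)) (h : l.1 + 1 < m - 1) :
      KPRel k n m q (Zgen k l * Zgen k ⟨l.1 + 1, h⟩ * Zgen k l)
        (Zgen k ⟨l.1 + 1, h⟩ * Zgen k l * Zgen k ⟨l.1 + 1, h⟩)
  | z_sq (l : Fin (m - 1)) :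
      KPRel k n m q (Zgen k l ^ 2)
        ((n : k)⁻¹ • ∑ i ∈ Finset.range n, ∑ j ∈ Finset.range n,
          (q⁻¹) ^ (i * j) • (Xgen k (idx1 l) ^ i * Xgen k (idx2 l) ^ j))

/-- The generalised Kac–Paljutkin algebra `H_{n,m}`: the quotient of the free algebra on
`x_1, …, x_m, z_1, …, z_{m-1}` by the two-sided ideal generated by the defining relations. -/
abbrev KPAlgebra (k : Type*) [Field k] (n m : ℕ) (q : k) := RingQuot (KPRel k n m q)

/-- The image of the generator `x_i` in `H_{n,m}`. -/
noncomputable def xH (k : Type*) [Field k] (n m : ℕ) (q : k) (i : Fin m) :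
    KPAlgebra k n m q := RingQuot.mkAlgHom k (KPRel k n m q) (Xgen k i)

/-- The image of the generator `z_l` in `H_{n,m}`. -/
noncomputable def zH (k : Type*) [Field k] (n m : ℕ) (q : k) (l : Fin (m - 1)) :
    KPAlgebra k n m q := RingQuot.mkAlgHom k (KPRel k n m q) (Zgen k l)

/-- The idempotent `Λ_λ = n^{−m} ∑_{i ∈ (Fin m → ZMod n)} q^{λ·i} x_1^{i_1} ⋯ x_m^{i_m}`
in `H_{n,m}`, where `λ·i = ∑_j λ_j i_j` is computed in `ZMod n` (with `q` raised to
natural-number representatives). -/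
noncomputable def LamH (k : Type*) [Field k] (n m : ℕ) [NeZero n] (q : k)
    (lam : Fin m → ZMod n) : KPAlgebra k n m q :=
  ((n : k) ^ m)⁻¹ • ∑ i : Fin m → ZMod n,
    q ^ (∑ j, lam j * i j : ZMod n).val •
      (List.ofFn (fun j : Fin m => xH k n m q j ^ (i j).val)).prod

/-- The element `y_l = ∑_λ ζ^{−λ_l λ_{l+1}} Λ_λ` of `H_{n,m}` (with `q = ζ²`). -/
noncomputable def yH (k : Type*) [Field k] (n m : ℕ) [NeZero n] (ζ : k)
    (l : Fin (m - 1)) : KPAlgebra k n m (ζ ^ 2) :=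
  ∑ lam : Fin m → ZMod n,
    (ζ⁻¹) ^ ((lam (idx1 l)).val * (lam (idx2 l)).val) • LamH k n m (ζ ^ 2) lam

/-- The element `s_l = y_l z_l` of `H_{n,m}` (with `q = ζ²`). -/
noncomputable def sH (k : Type*) [Field k] (n m : ℕ) [NeZero n] (ζ : k)
    (l : Fin (m - 1)) : KPAlgebra k n m (ζ ^ 2) :=
  yH k n m ζ l * zH k n m (ζ ^ 2) l

namespace KP

open Finset

variable {k : Type*} [Field k] {n m : ℕ} {q : k}

lemma hx_pow (i : Fin m) : xH k n m q i ^ n = 1 := by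
  rw [xH, ← map_pow, RingQuot.mkAlgHom_rel k (KPRel.x_pow i), map_one]

lemma hx_comm (i j : Fin m) : Commute (xH k n m q i) (xH k n m q j) := by
  unfold xH; rw [Commute, SemiconjBy, ← map_mul, ← map_mul]
  exact RingQuot.mkAlgHom_rel k (KPRel.x_comm i j)

lemma hz_x (l : Fin (m - 1)) (i : Fin m) :
    zH k n m q l * xH k n m q i = xH k n m q (sigma l i) * zH k n m q l := by
  unfold xH zH; rw [← map_mul, ← map_mul]
  exact RingQuot.mkAlgHom_rel k (KPRel.z_x l i)

lemma hz_comm (l t : Fin (m - 1)) (h : t.1 + 2 ≤ l.1 ∨ l.1 + 2 ≤ t.1) :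
    zH k n m q l * zH k n m q t = zH k n m q t * zH k n m q l := by
  unfold zH; rw [← map_mul, ← map_mul]
  exact RingQuot.mkAlgHom_rel k (KPRel.z_comm l t h)

lemma hbraid (l : Fin (m - 1)) (h : l.1 + 1 < m - 1) :
    zH k n m q l * zH k n m q ⟨l.1 + 1, h⟩ * zH k n m q l
      = zH k n m q ⟨l.1 + 1, h⟩ * zH k n m q l * zH k n m q ⟨l.1 + 1, h⟩ := by
  unfold zH; rw [← map_mul, ← map_mul, ← map_mul, ← map_mul]
  exact RingQuot.mkAlgHom_rel k (KPRel.braid l h)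

lemma hz_sq (l : Fin (m - 1)) :
    zH k n m q l ^ 2 = (n : k)⁻¹ • ∑ i ∈ Finset.range n, ∑ j ∈ Finset.range n,
      (q⁻¹) ^ (i * j) • (xH k n m q (idx1 l) ^ i * xH k n m q (idx2 l) ^ j) := by
  unfold zH xH
  rw [← map_pow, RingQuot.mkAlgHom_rel k (KPRel.z_sq l), map_smul, map_sum]
  congr 1; refine Finset.sum_congr rfl fun i _ => ?_
  rw [map_sum]; refine Finset.sum_congr rfl fun j _ => ?_
  rw [map_smul, map_mul, map_pow, map_pow]

end KP
set_option linter.unusedSectionVars false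

namespace KP

/-- The commutative submonoid generated by the `x` generators. -/
noncomputable def XM (k : Type*) [Field k] (n m : ℕ) (q : k) :
    Submonoid (KPAlgebra k n m q) := Submonoid.closure (Set.range (xH k n m q))

noncomputable instance (k : Type*) [Field k] (n m : ℕ) (q : k) : CommMonoid (XM k n m q) :=
  Submonoid.closureCommMonoidOfComm _ (by
    rintro a ⟨i, rfl⟩ b ⟨j, rfl⟩; exact hx_comm i j)

/-- `x i` as element of the commutative submonoid. -/
noncomputable def xS (k : Type*) [Field k] (n m : ℕ) (q : k) (i : Fin m) : XM k n m q :=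
  ⟨xH k n m q i, Submonoid.subset_closure ⟨i, rfl⟩⟩

variable {k : Type*} [Field k] {n m : ℕ} {q : k}

/-- The monomial `x^v`. -/
noncomputable def MH (k : Type*) [Field k] (n m : ℕ) [NeZero n] (q : k)
    (v : Fin m → ZMod n) : KPAlgebra k n m q :=
  (List.ofFn fun j => xH k n m q j ^ (v j).val).prod

lemma coe_prod_pow (f : Fin m → Fin m) (v : Fin m → ℕ) :
    ((∏ j, xS k n m q (f j) ^ v j : XM k n m q) : KPAlgebra k n m q)
      = (List.ofFn fun j => xH k n m q (f j) ^ v j).prod := by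
  have h := MonoidHom.map_list_prod ((XM k n m q).subtype)
    (List.ofFn fun j => xS k n m q (f j) ^ v j)
  erw [List.map_ofFn, List.prod_ofFn] at h
  rw [show ((∏ j, xS k n m q (f j) ^ v j : XM k n m q) : KPAlgebra k n m q)
      = (XM k n m q).subtype (∏ j, xS k n m q (f j) ^ v j) from rfl, h]
  refine congrArg List.prod (congrArg List.ofFn ?_)
  funext j
  simp only [Function.comp_apply, MonoidHom.coe_coe, Submonoid.coe_subtype, SubmonoidClass.coe_pow]
  rfl

variable [NeZero n]

lemma MH_eq_coe (v : Fin m → ZMod n) :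
    MH k n m q v = ((∏ j, xS k n m q j ^ (v j).val : XM k n m q) : KPAlgebra k n m q) :=
  (coe_prod_pow (k := k) (n := n) (m := m) (q := q) (fun j => j) (fun j => (v j).val)).symm

lemma xS_pow_n (i : Fin m) : xS k n m q i ^ n = 1 := by
  ext; exact hx_pow i

lemma xS_pow_val_add (i : Fin m) (a b : ZMod n) :
    xS k n m q i ^ (a + b).val = xS k n m q i ^ a.val * xS k n m q i ^ b.val := by
  rw [← pow_add, ZMod.val_add, ← pow_eq_pow_mod _ (xS_pow_n i)]

lemma MH_mul (v w : Fin m → ZMod n) :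
    MH k n m q v * MH k n m q w = MH k n m q (v + w) := by
  rw [MH_eq_coe, MH_eq_coe, MH_eq_coe, ← Submonoid.coe_mul]
  erw [← Finset.prod_mul_distrib]
  refine congrArg _ (Finset.prod_congr rfl fun j _ => ?_)
  exact (xS_pow_val_add j (v j) (w j)).symm

lemma MH_zero : MH k n m q 0 = 1 := by
  rw [MH_eq_coe]
  simp

lemma MH_comm (v w : Fin m → ZMod n) :
    MH k n m q v * MH k n m q w = MH k n m q w * MH k n m q v := by
  rw [MH_mul, MH_mul, add_comm]

lemma x_comm_MH (i : Fin m) (v : Fin m → ZMod n) :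
    Commute (xH k n m q i) (MH k n m q v) := by
  apply Commute.list_prod_right
  rw [List.forall_mem_ofFn_iff]
  exact fun j => (hx_comm i j).pow_right _

/-- slide a semiconjugating element through an `ofFn` product. -/
lemma ofFn_semiconj {M : Type*} [Monoid M] (a : M) :
    ∀ {N : ℕ} (f g : Fin N → M), (∀ j, a * f j = g j * a) →
      a * (List.ofFn f).prod = (List.ofFn g).prod * a := by
  intro N
  induction N with
  | zero => intro f g _; simp
  | succ N ih =>
    intro f g h
    rw [List.ofFn_succ, List.ofFn_succ, List.prod_cons, List.prod_cons, ← mul_assoc, h 0,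
      mul_assoc, ih _ _ (fun j => h j.succ), ← mul_assoc]

lemma sigma_symm (l : Fin (m - 1)) : (sigma l).symm = sigma l := by
  rw [sigma, Equiv.symm_swap]

lemma z_MH (l : Fin (m - 1)) (v : Fin m → ZMod n) :
    zH k n m q l * MH k n m q v = MH k n m q (fun t => v (sigma l t)) * zH k n m q l := by
  rw [MH, ofFn_semiconj _ _ (fun j => xH k n m q (sigma l j) ^ (v j).val)
    (fun j => (show SemiconjBy (zH k n m q l) (xH k n m q j) (xH k n m q (sigma l j)) from
      hz_x l j).pow_right (v j).val)]
  congr 1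
  rw [MH_eq_coe, ← coe_prod_pow (fun j => sigma l j) (fun j => (v j).val)]
  congr 1
  refine (Equiv.prod_comp (sigma l) (fun j => xS k n m q j ^ (v ((sigma l).symm j)).val)).symm.trans ?_ |>.symm
  refine Finset.prod_congr rfl fun j _ => ?_
  rw [Equiv.symm_apply_apply]

end KP
namespace KP

open Finset

variable {k : Type*} [Field k] {n : ℕ} [NeZero n] {q : k}

/-- The character `a ↦ q ^ a.val` on `ZMod n`. -/
noncomputable def ec (q : k) (a : ZMod n) : k := q ^ a.val

lemma ec_zero : ec q (0 : ZMod n) = 1 := by simp [ec]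

lemma ec_add (hq1 : q ^ n = 1) (a b : ZMod n) : ec q (a + b) = ec q a * ec q b := by
  rw [ec, ec, ec, ZMod.val_add, ← pow_eq_pow_mod _ hq1, pow_add]

lemma ec_natCast (hq1 : q ^ n = 1) (c : ℕ) : ec q ((c : ZMod n)) = q ^ c := by
  rw [ec, ZMod.val_natCast, ← pow_eq_pow_mod _ hq1]

lemma ec_neg_mul (hq1 : q ^ n = 1) (a : ZMod n) : ec q (-a) * ec q a = 1 := by
  rw [← ec_add hq1, neg_add_cancel, ec_zero]

lemma ec_sub (hq1 : q ^ n = 1) (a b : ZMod n) : ec q (a - b) = ec q a * ec q (-b) := by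
  rw [sub_eq_add_neg, ec_add hq1]

lemma ec_mul_val (hq1 : q ^ n = 1) (a b : ZMod n) : ec q (a * b) = (q ^ a.val) ^ b.val := by
  rw [ec, ZMod.val_mul, ← pow_eq_pow_mod _ hq1, pow_mul]

lemma ec_sum (hq1 : q ^ n = 1) {ι : Type*} (s : Finset ι) (f : ι → ZMod n) :
    ec q (∑ j ∈ s, f j) = ∏ j ∈ s, ec q (f j) := by
  classical
  induction s using Finset.induction with
  | empty => simp [ec_zero]
  | insert _ _ hx ih => rw [Finset.sum_insert hx, Finset.prod_insert hx, ec_add hq1, ih]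

lemma ec_ne_one (hq : IsPrimitiveRoot q n) {c : ZMod n} (hc : c ≠ 0) : ec q c ≠ 1 := by
  apply hq.pow_ne_one_of_pos_of_lt
  · exact fun h => hc ((ZMod.val_eq_zero c).mp h)
  · exact ZMod.val_lt c

lemma charSum (hq : IsPrimitiveRoot q n) (c : ZMod n) :
    ∑ a : ZMod n, ec q (c * a) = if c = 0 then (n : k) else 0 := by
  classical
  by_cases hc : c = 0
  · simp [hc, ec_zero, ZMod.card]
  · rw [if_neg hc]
    have h1 : ∑ a : ZMod n, ((AddChar.zmodChar n hq.pow_eq_one).mulShift c) a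
        = ∑ a : ZMod n, ec q (c * a) := by
      refine Finset.sum_congr rfl fun a _ => rfl
    rw [← h1, AddChar.sum_eq_ite, if_neg]
    intro h0
    have h2 := congrFun (congrArg (fun ψ : AddChar (ZMod n) k => (ψ : ZMod n → k)) h0) 1
    simp only [AddChar.zero_apply] at h2
    exact ec_ne_one hq hc (by simpa [AddChar.mulShift_apply, AddChar.zmodChar_apply, mul_one,
      ec] using h2)

lemma charSumPi (hq : IsPrimitiveRoot q n) {m : ℕ} (c : Fin m → ZMod n) :
    ∑ i : Fin m → ZMod n, ec q (∑ j, c j * i j) = if c = 0 then (n : k) ^ m else 0 := by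
  classical
  have h1 : ∑ i : Fin m → ZMod n, ec q (∑ j, c j * i j)
      = ∑ i ∈ Fintype.piFinset (fun _ : Fin m => (univ : Finset (ZMod n))),
          ∏ j, ec q (c j * i j) := by
    rw [Fintype.piFinset_univ]
    exact Finset.sum_congr rfl fun i _ => ec_sum hq.pow_eq_one _ _
  rw [h1, ← Finset.prod_univ_sum (fun _ : Fin m => (univ : Finset (ZMod n))) (fun j a => ec q (c j * a))]
  by_cases hc : c = 0
  · simp [hc, ec_zero, ZMod.card, charSum hq]
  · obtain ⟨j, hj⟩ : ∃ j, c j ≠ 0 := by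
      by_contra h
      push_neg at h
      exact hc (funext h)
    rw [if_neg hc]
    refine Finset.prod_eq_zero (Finset.mem_univ j) ?_
    rw [charSum hq, if_neg hj]

end KP
namespace KP

open Finset

variable {k : Type*} [Field k] {n m : ℕ} [NeZero n] {q : k}

/-- dot product in `ZMod n`. -/
def dot (lam v : Fin m → ZMod n) : ZMod n := ∑ j, lam j * v j

lemma dot_add_right (lam v w : Fin m → ZMod n) :
    dot lam (v + w) = dot lam v + dot lam w := by
  simp [dot, mul_add, Finset.sum_add_distrib]

lemma dot_sub_left (lam mu v : Fin m → ZMod n) :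
    dot (lam - mu) v = dot lam v - dot mu v := by
  simp [dot, sub_mul, Finset.sum_sub_distrib]

lemma dot_comm (lam v : Fin m → ZMod n) : dot lam v = dot v lam := by
  simp [dot, mul_comm]

lemma dot_single (lam : Fin m → ZMod n) (t : Fin m) (a : ZMod n) :
    dot lam (Pi.single t a) = lam t * a := by
  classical
  rw [dot, Finset.sum_eq_single t]
  · rw [Pi.single_eq_same]
  · intro b _ hb
    rw [Pi.single_eq_of_ne hb, mul_zero]
  · intro h
    exact absurd (Finset.mem_univ t) h

lemma LamH_eq (lam : Fin m → ZMod n) :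
    LamH k n m q lam = ((n : k) ^ m)⁻¹ • ∑ i : Fin m → ZMod n,
      ec q (dot lam i) • MH k n m q i := rfl

lemma Lam_mul_MH (hq1 : q ^ n = 1) (lam v : Fin m → ZMod n) :
    LamH k n m q lam * MH k n m q v = ec q (-(dot lam v)) • LamH k n m q lam := by
  have h2 : ∑ i : Fin m → ZMod n, ec q (dot lam i) • MH k n m q (i + v)
      = ec q (-(dot lam v)) • ∑ i : Fin m → ZMod n, ec q (dot lam i) • MH k n m q i := by
    rw [Finset.smul_sum]
    refine Fintype.sum_equiv (Equiv.addRight v) _ _ fun i => ?_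
    simp only [Equiv.coe_addRight, smul_smul]
    congr 1
    rw [← ec_add hq1, dot_add_right]
    congr 1
    ring
  calc LamH k n m q lam * MH k n m q v
      = ((n : k) ^ m)⁻¹ • ∑ i : Fin m → ZMod n, ec q (dot lam i) • MH k n m q (i + v) := by
        rw [LamH_eq, smul_mul_assoc, Finset.sum_mul]
        congr 1
        exact Finset.sum_congr rfl fun i _ => by rw [smul_mul_assoc, MH_mul]
    _ = ((n : k) ^ m)⁻¹ • (ec q (-(dot lam v)) •
          ∑ i : Fin m → ZMod n, ec q (dot lam i) • MH k n m q i) := by rw [h2]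
    _ = ec q (-(dot lam v)) • LamH k n m q lam := by rw [LamH_eq, smul_comm]

lemma MH_comm_Lam (lam v : Fin m → ZMod n) :
    MH k n m q v * LamH k n m q lam = LamH k n m q lam * MH k n m q v := by
  rw [LamH_eq, smul_mul_assoc, mul_smul_comm, Finset.sum_mul, Finset.mul_sum]
  congr 1
  refine Finset.sum_congr rfl fun i _ => ?_
  rw [smul_mul_assoc, mul_smul_comm, MH_comm]

lemma MH_mul_Lam (hq1 : q ^ n = 1) (lam v : Fin m → ZMod n) :
    MH k n m q v * LamH k n m q lam = ec q (-(dot lam v)) • LamH k n m q lam := by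
  rw [MH_comm_Lam, Lam_mul_MH hq1]

lemma x_comm_Lam (i : Fin m) (lam : Fin m → ZMod n) :
    Commute (xH k n m q i) (LamH k n m q lam) := by
  rw [Commute, SemiconjBy, LamH_eq, smul_mul_assoc, mul_smul_comm, Finset.sum_mul,
    Finset.mul_sum]
  congr 1
  refine Finset.sum_congr rfl fun v _ => ?_
  rw [smul_mul_assoc, mul_smul_comm, (x_comm_MH i v).eq]

lemma Lam_mul_Lam (hq : IsPrimitiveRoot q n) (hnk : (n : k) ≠ 0) (lam mu : Fin m → ZMod n) :
    LamH k n m q lam * LamH k n m q mu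
      = if lam = mu then LamH k n m q lam else 0 := by
  classical
  have key : ∀ i : Fin m → ZMod n,
      ec q (dot mu i) • (LamH k n m q lam * MH k n m q i)
        = ec q (dot (mu - lam) i) • LamH k n m q lam := fun i => by
    rw [Lam_mul_MH hq.pow_eq_one, smul_smul, ← ec_add hq.pow_eq_one, dot_sub_left]
    congr 2
    ring
  calc LamH k n m q lam * LamH k n m q mu
      = ((n : k) ^ m)⁻¹ • ∑ i : Fin m → ZMod n,
          ec q (dot (mu - lam) i) • LamH k n m q lam := by
        rw [LamH_eq mu, mul_smul_comm, Finset.mul_sum]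
        congr 1
        refine Finset.sum_congr rfl fun i _ => ?_
        rw [mul_smul_comm, key]
    _ = (((n : k) ^ m)⁻¹ * ∑ i : Fin m → ZMod n, ec q (dot (mu - lam) i)) •
          LamH k n m q lam := by
        rw [← Finset.sum_smul, smul_smul]
    _ = if lam = mu then LamH k n m q lam else 0 := by
        have : ∑ i : Fin m → ZMod n, ec q (dot (mu - lam) i)
            = if mu - lam = 0 then (n : k) ^ m else 0 := charSumPi hq (mu - lam)
        rw [this]
        by_cases h : lam = mu
        · rw [if_pos h, if_pos (by rw [h, sub_self]), inv_mul_cancel₀ (pow_ne_zero _ hnk),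
            one_smul]
        · rw [if_neg h, if_neg (fun h0 => h (sub_eq_zero.mp h0).symm), mul_zero, zero_smul]

lemma Lam_sum (hq : IsPrimitiveRoot q n) (hnk : (n : k) ≠ 0) :
    ∑ lam : Fin m → ZMod n, LamH k n m q lam = 1 := by
  classical
  have h1 : ∑ lam : Fin m → ZMod n, LamH k n m q lam
      = ((n : k) ^ m)⁻¹ • ∑ i : Fin m → ZMod n,
          (∑ lam : Fin m → ZMod n, ec q (dot lam i)) • MH k n m q i := by
    simp_rw [LamH_eq, ← Finset.smul_sum]
    congr 1
    rw [Finset.sum_comm]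
    refine Finset.sum_congr rfl fun i _ => ?_
    rw [Finset.sum_smul]
  rw [h1]
  have h2 : ∀ i : Fin m → ZMod n, (∑ lam : Fin m → ZMod n, ec q (dot lam i))
      = if i = 0 then (n : k) ^ m else 0 := fun i => by
    rw [← charSumPi hq i]
    exact Finset.sum_congr rfl fun lam _ => by rw [dot_comm, dot]
  rw [Finset.sum_congr rfl fun i _ => by rw [h2 i]]
  simp_rw [ite_smul, zero_smul]
  rw [Finset.sum_ite_eq' Finset.univ (0 : Fin m → ZMod n)
    (fun i => ((n : k) ^ m : k) • MH k n m q i), if_pos (Finset.mem_univ _), MH_zero, smul_smul,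
    inv_mul_cancel₀ (pow_ne_zero _ hnk), one_smul]

end KP
namespace KP

open Finset

variable {k : Type*} [Field k] {n m : ℕ} [NeZero n] {q : k}

lemma sum_range_zmod {M : Type*} [AddCommMonoid M] (f : ZMod n → M) :
    ∑ i ∈ Finset.range n, f (i : ZMod n) = ∑ a : ZMod n, f a := by
  refine Finset.sum_nbij' (fun i => (i : ZMod n)) (fun a => a.val) ?_ ?_ ?_ ?_ ?_
  · intro a _; exact Finset.mem_univ _
  · intro a _; exact Finset.mem_range.mpr (ZMod.val_lt a)
  · intro a ha; exact ZMod.val_cast_of_lt (Finset.mem_range.mp ha)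
  · intro a _; exact ZMod.natCast_rightInverse a
  · intro a _; rfl

lemma ec_neg (hq1 : q ^ n = 1) (a : ZMod n) : ec q (-a) = (ec q a)⁻¹ :=
  eq_inv_of_mul_eq_one_left (ec_neg_mul hq1 a)

lemma sigma_invol (l : Fin (m - 1)) (t : Fin m) : sigma l (sigma l t) = t := by
  conv_lhs => rw [show (sigma l) ((sigma l) t) = (sigma l).symm ((sigma l) t) from by
    rw [sigma_symm]]
  exact Equiv.symm_apply_apply _ t

/-- precomposition with `sigma l` as an equiv on tuples. -/
def preSig {n m : ℕ} (l : Fin (m - 1)) : (Fin m → ZMod n) ≃ (Fin m → ZMod n) where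
  toFun i := fun t => i (sigma l t)
  invFun i := fun t => i (sigma l t)
  left_inv i := funext fun t => congrArg i (sigma_invol l t)
  right_inv i := funext fun t => congrArg i (sigma_invol l t)

lemma z_Lam (l : Fin (m - 1)) (lam : Fin m → ZMod n) :
    zH k n m q l * LamH k n m q lam
      = LamH k n m q (fun t => lam (sigma l t)) * zH k n m q l := by
  rw [LamH_eq, LamH_eq, mul_smul_comm, smul_mul_assoc, Finset.mul_sum, Finset.sum_mul]
  congr 1
  have h1 : ∀ i : Fin m → ZMod n,
      zH k n m q l * (ec q (dot lam i) • MH k n m q i)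
        = ec q (dot lam i) • (MH k n m q (fun t => i (sigma l t)) * zH k n m q l) := fun i => by
    rw [mul_smul_comm, z_MH]
  rw [Finset.sum_congr rfl fun i _ => h1 i]
  refine Fintype.sum_equiv (preSig l) _ _ fun i => ?_
  rw [smul_mul_assoc]
  congr 1
  rw [dot, dot]
  exact congrArg (ec q) ((Equiv.sum_comp (sigma l) (fun t => lam t * i t)).symm)

lemma MH_single (t : Fin m) (a : ZMod n) :
    MH k n m q (Pi.single t a) = xH k n m q t ^ a.val := by
  classical
  rw [MH_eq_coe]
  rw [Finset.prod_eq_single t]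
  · rw [Pi.single_eq_same]; rfl
  · intro b _ hb
    rw [Pi.single_eq_of_ne hb, ZMod.val_zero, pow_zero]; rfl
  · intro h; exact absurd (Finset.mem_univ t) h

lemma Lam_mul_xpow (hq1 : q ^ n = 1) (lam : Fin m → ZMod n) (t : Fin m) {c : ℕ} (hc : c < n) :
    LamH k n m q lam * xH k n m q t ^ c
      = ec q (-(lam t * (c : ZMod n))) • LamH k n m q lam := by
  have : xH k n m q t ^ c = MH k n m q (Pi.single t (c : ZMod n)) := by
    rw [MH_single, ZMod.val_cast_of_lt hc]
  rw [this, Lam_mul_MH hq1, dot_single]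

lemma Lam_mul_zsq (hq : IsPrimitiveRoot q n) (hnk : (n : k) ≠ 0) (l : Fin (m - 1))
    (lam : Fin m → ZMod n) :
    LamH k n m q lam * zH k n m q l ^ 2
      = ec q (lam (idx1 l) * lam (idx2 l)) • LamH k n m q lam := by
  classical
  have hq1 := hq.pow_eq_one
  set a := lam (idx1 l) with ha
  set b := lam (idx2 l) with hb
  have term : ∀ i ∈ Finset.range n, ∀ j ∈ Finset.range n,
      LamH k n m q lam * ((q⁻¹) ^ (i * j) • (xH k n m q (idx1 l) ^ i * xH k n m q (idx2 l) ^ j))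
        = ec q (-((i : ZMod n) * (j : ZMod n) + a * (i : ZMod n) + b * (j : ZMod n)))
            • LamH k n m q lam := by
    intro i hi j hj
    rw [mul_smul_comm, ← mul_assoc, Lam_mul_xpow hq1 lam _ (Finset.mem_range.mp hi),
      smul_mul_assoc, Lam_mul_xpow hq1 lam _ (Finset.mem_range.mp hj), smul_smul, smul_smul]
    congr 1
    rw [inv_pow, ← ec_natCast hq1 (i * j), ← ec_neg hq1, ← ec_add hq1, ← ec_add hq1]
    congr 1
    push_cast
    ring
  have key : LamH k n m q lam * zH k n m q l ^ 2
      = ((n : k)⁻¹ * ∑ i' : ZMod n, ∑ j' : ZMod n, ec q (-(i' * j' + a * i' + b * j')))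
          • LamH k n m q lam := by
    rw [hz_sq l, mul_smul_comm, Finset.mul_sum]
    rw [Finset.sum_congr rfl fun i hi => by
      rw [Finset.mul_sum, Finset.sum_congr rfl fun j hj => term i hi j hj]]
    rw [show ∑ i ∈ Finset.range n, ∑ j ∈ Finset.range n,
        ec q (-((i : ZMod n) * (j : ZMod n) + a * (i : ZMod n) + b * (j : ZMod n)))
          • LamH k n m q lam
        = ∑ i' : ZMod n, ∑ j' : ZMod n, ec q (-(i' * j' + a * i' + b * j'))
            • LamH k n m q lam from by
      rw [← sum_range_zmod (fun i' => ∑ j' : ZMod n,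
        ec q (-(i' * j' + a * i' + b * j')) • LamH k n m q lam)]
      exact Finset.sum_congr rfl fun i _ => by
        rw [← sum_range_zmod (fun j' => ec q (-((i : ZMod n) * j' + a * (i : ZMod n) + b * j'))
          • LamH k n m q lam)]]
    rw [show (∑ i' : ZMod n, ∑ j' : ZMod n, ec q (-(i' * j' + a * i' + b * j'))
        • LamH k n m q lam)
        = (∑ i' : ZMod n, ∑ j' : ZMod n, ec q (-(i' * j' + a * i' + b * j')))
            • LamH k n m q lam from by
      rw [Finset.sum_smul]
      exact Finset.sum_congr rfl fun i' _ => by rw [Finset.sum_smul]]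
    rw [smul_smul]
  rw [key]
  congr 1
  have inner : ∀ i' : ZMod n, ∑ j' : ZMod n, ec q (-(i' * j' + a * i' + b * j'))
      = ec q (-(a * i')) * (if -(i' + b) = 0 then (n : k) else 0) := fun i' => by
    rw [← charSum hq (-(i' + b)), Finset.mul_sum]
    exact Finset.sum_congr rfl fun j' _ => by rw [← ec_add hq1]; congr 1; ring
  rw [Finset.sum_congr rfl fun i' _ => inner i']
  simp_rw [neg_eq_zero, add_eq_zero_iff_eq_neg, mul_ite, mul_zero]
  rw [Finset.sum_ite_eq' Finset.univ (-b : ZMod n) (fun i' => ec q (-(a * i')) * (n : k)),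
    if_pos (Finset.mem_univ _), show -(a * -b) = a * b from by ring,
    mul_comm (ec q (a * b)) (n : k), ← mul_assoc, inv_mul_cancel₀ hnk, one_mul]

end KP
namespace KP

open Finset

variable {k : Type*} [Field k] {n m : ℕ} [NeZero n] {q : k}

/-- Diagonal element `∑ f(λ) Λ_λ`. -/
noncomputable def DH (k : Type*) [Field k] (n m : ℕ) [NeZero n] (q : k)
    (f : (Fin m → ZMod n) → k) : KPAlgebra k n m q :=
  ∑ lam : Fin m → ZMod n, f lam • LamH k n m q lam

lemma DH_mul (hq : IsPrimitiveRoot q n) (hnk : (n : k) ≠ 0)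
    (f g : (Fin m → ZMod n) → k) :
    DH k n m q f * DH k n m q g = DH k n m q (fun lam => f lam * g lam) := by
  classical
  rw [DH, DH, Finset.sum_mul_sum, DH]
  refine Finset.sum_congr rfl fun lam _ => ?_
  have h1 : ∀ mu : Fin m → ZMod n,
      f lam • LamH k n m q lam * (g mu • LamH k n m q mu)
        = if lam = mu then (f lam * g mu) • LamH k n m q lam else 0 := fun mu => by
    rw [smul_mul_assoc, mul_smul_comm, Lam_mul_Lam hq hnk, smul_smul]
    by_cases h : lam = mu
    · rw [if_pos h, if_pos h]
    · rw [if_neg h, if_neg h, smul_zero]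
  rw [Finset.sum_congr rfl fun mu _ => h1 mu,
    Finset.sum_ite_eq Finset.univ lam (fun mu => (f lam * g mu) • LamH k n m q lam),
    if_pos (Finset.mem_univ _)]

lemma x_comm_DH (i : Fin m) (f : (Fin m → ZMod n) → k) :
    Commute (xH k n m q i) (DH k n m q f) := by
  refine Commute.sum_right _ _ _ fun lam _ => ?_
  exact (x_comm_Lam i lam).smul_right _

lemma z_DH (l : Fin (m - 1)) (f : (Fin m → ZMod n) → k) :
    zH k n m q l * DH k n m q f
      = DH k n m q (fun lam => f (fun t => lam (sigma l t))) * zH k n m q l := by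
  rw [DH, DH, Finset.mul_sum, Finset.sum_mul]
  have h1 : ∀ lam : Fin m → ZMod n,
      zH k n m q l * (f lam • LamH k n m q lam)
        = f lam • (LamH k n m q (fun t => lam (sigma l t)) * zH k n m q l) := fun lam => by
    rw [mul_smul_comm, z_Lam]
  rw [Finset.sum_congr rfl fun lam _ => h1 lam]
  refine Fintype.sum_equiv (preSig l) _ _ fun lam => ?_
  rw [smul_mul_assoc]
  congr 1
  exact congrArg f (funext fun t => (congrArg lam (sigma_invol l t)).symm)

lemma slideD (l : Fin (m - 1)) (g : (Fin m → ZMod n) → k) (w : KPAlgebra k n m q) :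
    zH k n m q l * (DH k n m q g * w)
      = DH k n m q (fun lam => g (fun t => lam (sigma l t))) * (zH k n m q l * w) := by
  rw [← mul_assoc, z_DH, mul_assoc]

lemma DH_one (hq : IsPrimitiveRoot q n) (hnk : (n : k) ≠ 0) :
    DH k n m q (fun _ => (1 : k)) = 1 := by
  rw [DH]
  simp only [one_smul]
  exact Lam_sum hq hnk

lemma DH_mul_zsq (hq : IsPrimitiveRoot q n) (hnk : (n : k) ≠ 0) (l : Fin (m - 1))
    (f : (Fin m → ZMod n) → k) :
    DH k n m q f * zH k n m q l ^ 2
      = DH k n m q (fun lam => f lam * ec q (lam (idx1 l) * lam (idx2 l))) := by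
  rw [DH, DH, Finset.sum_mul]
  refine Finset.sum_congr rfl fun lam _ => ?_
  rw [smul_mul_assoc, Lam_mul_zsq hq hnk, smul_smul, mul_comm (f lam) _, mul_comm]

lemma sigma_apply_idx1 (l : Fin (m - 1)) : sigma l (idx1 l) = idx2 l :=
  Equiv.swap_apply_left _ _

lemma sigma_apply_idx2 (l : Fin (m - 1)) : sigma l (idx2 l) = idx1 l :=
  Equiv.swap_apply_right _ _

lemma idx1_val (l : Fin (m - 1)) : (idx1 l : Fin m).val = l.1 := rfl

lemma idx2_val (l : Fin (m - 1)) : (idx2 l : Fin m).val = l.1 + 1 := rfl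

lemma sigma_fix (l : Fin (m - 1)) (p : Fin m) (h1 : p.1 ≠ l.1) (h2 : p.1 ≠ l.1 + 1) :
    sigma l p = p := by
  refine Equiv.swap_apply_of_ne_of_ne ?_ ?_
  · exact fun h => h1 (by rw [h, idx1_val])
  · exact fun h => h2 (by rw [h, idx2_val])

/-- the coefficient function of `y_l`. -/
noncomputable def Yf {n m : ℕ} [NeZero n] (ζ : k) (l : Fin (m - 1))
    (lam : Fin m → ZMod n) : k :=
  ζ⁻¹ ^ ((lam (idx1 l)).val * (lam (idx2 l)).val)

lemma yH_eq (ζ : k) (l : Fin (m - 1)) :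
    yH k n m ζ l = DH k n m (ζ ^ 2) (Yf ζ l) := rfl

lemma Yf_pre_self (ζ : k) (l : Fin (m - 1)) :
    (fun lam : Fin m → ZMod n => Yf ζ l (fun t => lam (sigma l t))) = Yf ζ l := by
  funext lam
  simp only [Yf, sigma_apply_idx1, sigma_apply_idx2]
  rw [Nat.mul_comm]

lemma Yf_pre_far (ζ : k) (l t : Fin (m - 1)) (h : t.1 + 2 ≤ l.1 ∨ l.1 + 2 ≤ t.1) :
    (fun lam : Fin m → ZMod n => Yf ζ t (fun u => lam (sigma l u))) = Yf ζ t := by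
  funext lam
  have h1 : sigma l (idx1 t) = idx1 t := sigma_fix l _ (by rw [idx1_val]; omega)
    (by rw [idx1_val]; omega)
  have h2 : sigma l (idx2 t) = idx2 t := sigma_fix l _ (by rw [idx2_val]; omega)
    (by rw [idx2_val]; omega)
  simp only [Yf, h1, h2]

end KP
open KP

/-- In the generalised Kac–Paljutkin algebra `H_{n,m}` (with `ζ` a primitive
`2n`-th root of unity and `q = ζ²`), the elements `s_l = y_l z_l` satisfy
`s_l x_i = x_{σ_l(i)} s_l`, `s_l² = 1`, `s_l s_k = s_k s_l` for `|k−l| ≥ 2`, and the braid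
relations `s_l s_{l+1} s_l = s_{l+1} s_l s_{l+1}`. -/
theorem sH_relations {k : Type*} [Field k] [IsAlgClosed k] [CharZero k]
    (n m : ℕ) (hn : 2 ≤ n) (hm : 2 ≤ m) (ζ : k) (hζ : IsPrimitiveRoot ζ (2 * n)) :
    haveI : NeZero n := ⟨by omega⟩
    (∀ (l : Fin (m - 1)) (i : Fin m),
        sH k n m ζ l * xH k n m (ζ ^ 2) i = xH k n m (ζ ^ 2) (sigma l i) * sH k n m ζ l) ∧
    (∀ l : Fin (m - 1), sH k n m ζ l * sH k n m ζ l = 1) ∧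
    (∀ l t : Fin (m - 1), (t.1 + 2 ≤ l.1 ∨ l.1 + 2 ≤ t.1) →
        sH k n m ζ l * sH k n m ζ t = sH k n m ζ t * sH k n m ζ l) ∧
    (∀ (l : Fin (m - 1)) (h : l.1 + 1 < m - 1),
        sH k n m ζ l * sH k n m ζ ⟨l.1 + 1, h⟩ * sH k n m ζ l
          = sH k n m ζ ⟨l.1 + 1, h⟩ * sH k n m ζ l * sH k n m ζ ⟨l.1 + 1, h⟩) := by
  haveI : NeZero n := ⟨by omega⟩
  have hq : IsPrimitiveRoot (ζ ^ 2) n := hζ.pow (by omega) rfl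
  have hq1 : (ζ ^ 2) ^ n = 1 := hq.pow_eq_one
  have hnk : ((n : ℕ) : k) ≠ 0 := Nat.cast_ne_zero.mpr (by omega)
  have hζ0 : ζ ≠ 0 := hζ.ne_zero (by omega)
  have hbase : ζ⁻¹ * ζ⁻¹ * ζ ^ 2 = 1 := by
    rw [sq]
    field_simp
  refine ⟨?_, ?_, ?_, ?_⟩
  · -- s_l x_i = x_{σ_l i} s_l
    intro l i
    simp only [sH, yH_eq]
    rw [mul_assoc, hz_x, ← mul_assoc, ← (x_comm_DH (sigma l i) (Yf ζ l)).eq, mul_assoc]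
  · -- s_l ^ 2 = 1
    intro l
    simp only [sH, yH_eq]
    rw [mul_assoc, slideD, Yf_pre_self, ← mul_assoc, DH_mul hq hnk, ← pow_two,
      DH_mul_zsq hq hnk]
    refine Eq.trans ?_ (DH_one hq hnk)
    congr 1
    funext lam
    show Yf ζ l lam * Yf ζ l lam * ec (ζ ^ 2) (lam (idx1 l) * lam (idx2 l)) = 1
    rw [Yf, ec_mul_val hq1, ← pow_mul, ← mul_pow, ← mul_pow, hbase, one_pow]
  · -- commuting far-apart s's
    intro l t h
    have hL : sH k n m ζ l * sH k n m ζ t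
        = DH k n m (ζ ^ 2) (fun lam => Yf ζ l lam * Yf ζ t lam)
            * (zH k n m (ζ ^ 2) l * zH k n m (ζ ^ 2) t) := by
      simp only [sH, yH_eq]
      rw [mul_assoc, slideD, Yf_pre_far ζ l t h, ← mul_assoc, DH_mul hq hnk]
    have hR : sH k n m ζ t * sH k n m ζ l
        = DH k n m (ζ ^ 2) (fun lam => Yf ζ t lam * Yf ζ l lam)
            * (zH k n m (ζ ^ 2) t * zH k n m (ζ ^ 2) l) := by
      simp only [sH, yH_eq]
      rw [mul_assoc, slideD, Yf_pre_far ζ t l h.symm, ← mul_assoc, DH_mul hq hnk]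
    rw [hL, hR, hz_comm l t h]
    congr 1
    exact congrArg _ (funext fun lam => mul_comm _ _)
  · -- braid relations
    intro l h
    set l' : Fin (m - 1) := ⟨l.1 + 1, h⟩ with hl'
    have hvl' : (l' : Fin (m - 1)).1 = l.1 + 1 := rfl
    have hid : idx1 l' = idx2 l := Fin.ext (by rw [idx1_val, idx2_val, hvl'])
    have e1 : sigma l (idx1 l) = idx2 l := sigma_apply_idx1 l
    have e2 : sigma l (idx2 l) = idx1 l := sigma_apply_idx2 l
    have e3 : sigma l (idx2 l') = idx2 l' := sigma_fix l _
      (by rw [idx2_val, hvl']; omega) (by rw [idx2_val, hvl']; omega)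
    have f3 : sigma l' (idx1 l) = idx1 l := sigma_fix l' _
      (by rw [idx1_val, hvl']; omega) (by rw [idx1_val, hvl']; omega)
    have f4 : sigma l' (idx2 l) = idx2 l' := by rw [← hid]; exact sigma_apply_idx1 l'
    have f5 : sigma l' (idx2 l') = idx2 l := by rw [sigma_apply_idx2 l', hid]
    have hL : sH k n m ζ l * sH k n m ζ l' * sH k n m ζ l
        = DH k n m (ζ ^ 2) (fun lam => Yf ζ l lam
              * (Yf ζ l' (fun u => lam (sigma l u))
              * Yf ζ l (fun u => lam (sigma l (sigma l' u)))))
            * (zH k n m (ζ ^ 2) l * (zH k n m (ζ ^ 2) l' * zH k n m (ζ ^ 2) l)) := by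
      rw [mul_assoc]
      simp only [sH, yH_eq]
      rw [mul_assoc (DH k n m (ζ ^ 2) (Yf ζ l')), slideD, mul_assoc, slideD, slideD,
        ← mul_assoc, ← mul_assoc, DH_mul hq hnk, DH_mul hq hnk]
      congr 1
      refine congrArg _ (funext fun lam => ?_)
      show (Yf ζ l lam * Yf ζ l' fun u => lam (sigma l u)) *
          Yf ζ l (fun u => lam (sigma l (sigma l' u))) = _
      rw [mul_assoc]
    have hR : sH k n m ζ l' * sH k n m ζ l * sH k n m ζ l'
        = DH k n m (ζ ^ 2) (fun lam => Yf ζ l' lam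
              * (Yf ζ l (fun u => lam (sigma l' u))
              * Yf ζ l' (fun u => lam (sigma l' (sigma l u)))))
            * (zH k n m (ζ ^ 2) l' * (zH k n m (ζ ^ 2) l * zH k n m (ζ ^ 2) l'))
        := by
      rw [mul_assoc]
      simp only [sH, yH_eq]
      rw [mul_assoc (DH k n m (ζ ^ 2) (Yf ζ l)), slideD, mul_assoc, slideD, slideD,
        ← mul_assoc, ← mul_assoc, DH_mul hq hnk, DH_mul hq hnk]
      congr 1
      refine congrArg _ (funext fun lam => ?_)
      show (Yf ζ l' lam * Yf ζ l fun u => lam (sigma l' u)) *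
          Yf ζ l' (fun u => lam (sigma l' (sigma l u))) = _
      rw [mul_assoc]
    rw [hL, hR, show zH k n m (ζ ^ 2) l * (zH k n m (ζ ^ 2) l' * zH k n m (ζ ^ 2) l)
        = zH k n m (ζ ^ 2) l' * (zH k n m (ζ ^ 2) l * zH k n m (ζ ^ 2) l') from by
      rw [← mul_assoc, ← mul_assoc, hbraid l h]]
    congr 1
    refine congrArg _ (funext fun lam => ?_)
    simp only [Yf, hid, e1, e2, e3, f3, f4, f5]
    ring
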